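/- (Wythoff's theorem.) The set of P-positions of Wythoff Nim equals {(⌊φn⌋, ⌊φ²n⌋) : n ∈ ℕ} ∪ {(⌊φ²n⌋, ⌊φn⌋) : n ∈ ℕ}, where φ := (1+√5)/2 is the golden ratio. -/

import Mathlib

/-- A legal move of Wythoff Nim: remove `t ≥ 1` tokens from one heap, or `t ≥ 1`
tokens from both heaps. -/
def wythoffMove (pos pos' : ℕ × ℕ) : Prop :=
  ∃ t : ℕ, 1 ≤ t ∧
    ((t ≤ pos.1 ∧ pos' = (pos.1 - t, pos.2)) ∨
     (t ≤ pos.2 ∧ pos' = (pos.1, pos.2 - t)) ∨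
     (t ≤ pos.1 ∧ t ≤ pos.2 ∧ pos' = (pos.1 - t, pos.2 - t)))

/-- `pos` is a P-position: every legal move leads to a non-P-position.  (Every legal
move strictly decreases the coordinate sum, which makes the recursion well-founded.) -/
def PPos (move : ℕ × ℕ → ℕ × ℕ → Prop) : ℕ × ℕ → Prop
  | pos => ∀ pos', move pos pos' → pos'.1 + pos'.2 < pos.1 + pos.2 → ¬ PPos move pos'
termination_by pos => pos.1 + pos.2

/-- The golden ratio `φ = (1+√5)/2`. -/
noncomputable def phi : ℝ := (1 + Real.sqrt 5) / 2

/-! The positions `(⌊φn⌋, ⌊φn⌋ + n)` and their mirror images form a kernel of the move graph.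
Both halves of this rest on Rayleigh's theorem: `⌊φn⌋` and `⌊φ²n⌋ = ⌊φn⌋ + n` (`n ≥ 1`)
partition the positive integers. So each heap size is the first coordinate of exactly one of these
positions, and so is each difference `y - x`; hence row, column and diagonal moves all leave the
set. Conversely, from `(x, y)` with `x ≤ y` outside the set, either `y` can be lowered to the
partner of `x`, or `d = y - x` is too small and the diagonal move to `(⌊φd⌋, ⌊φd⌋ + d)` works. -/

open Real
open scoped symmDiff

theorem PPos_iff_mem_of_stable_of_absorbing {move : ℕ × ℕ → ℕ × ℕ → Prop} {S : Set (ℕ × ℕ)}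
    (stable : ∀ p q, move p q → p ∈ S → q ∉ S)
    (absorbing : ∀ p ∉ S, ∃ q, move p q ∧ q.1 + q.2 < p.1 + p.2 ∧ q ∈ S) (p : ℕ × ℕ) :
    PPos move p ↔ p ∈ S := by
  induction hp : p.1 + p.2 using Nat.strong_induction_on generalizing p with
  | _ N ih =>
    rw [PPos]
    constructor
    · intro hP
      by_contra hpS
      obtain ⟨q, hmove, hlt, hqS⟩ := absorbing p hpS
      exact hP q hmove hlt ((ih _ (hp ▸ hlt) q rfl).mpr hqS)
    · intro hpS q hmove hlt hP
      exact stable p q hmove hpS ((ih _ (hp ▸ hlt) q rfl).mp hP)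

theorem Irrational.xor_exists_natFloor_mul_eq {r s : ℝ} (hrs : r.HolderConjugate s)
    (hr : Irrational r) {j : ℕ} (hj : 0 < j) :
    Xor (∃ n : ℕ, 0 < n ∧ ⌊r * n⌋₊ = j) (∃ n : ℕ, 0 < n ∧ ⌊s * n⌋₊ = j) := by
  have mem_iff : ∀ {t : ℝ}, 0 ≤ t →
      ((j : ℤ) ∈ {beattySeq t k | k > 0} ↔ ∃ n : ℕ, 0 < n ∧ ⌊t * n⌋₊ = j) := by
    intro t ht
    have floor_eq (n : ℕ) : beattySeq t n = ⌊t * n⌋₊ := by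
      rw [beattySeq, Int.natCast_floor_eq_floor (by positivity), Int.cast_natCast, mul_comm]
    constructor
    · rintro ⟨k, hk, hkj⟩
      lift k to ℕ using hk.le
      exact ⟨k, by exact_mod_cast hk, by rw [← Nat.cast_inj (R := ℤ), ← floor_eq, hkj]⟩
    · rintro ⟨n, hn, rfl⟩
      exact ⟨n, by exact_mod_cast hn, floor_eq n⟩
  have hj' : (j : ℤ) ∈ {beattySeq r k | k > 0} ∆ {beattySeq s k | k > 0} := by
    rw [hr.beattySeq_symmDiff_beattySeq_pos hrs]
    exact Int.natCast_pos.mpr hj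
  rwa [Set.mem_symmDiff, mem_iff hrs.nonneg, mem_iff hrs.symm.nonneg] at hj'

theorem phi_eq_goldenRatio : phi = goldenRatio := rfl

theorem phi_pos : 0 < phi := goldenRatio_pos

noncomputable def wythoffA (n : ℕ) : ℕ := ⌊phi * n⌋₊

@[simp]
theorem wythoffA_zero : wythoffA 0 = 0 := by simp [wythoffA]

theorem floor_phi_sq_mul (n : ℕ) : ⌊phi ^ 2 * n⌋₊ = wythoffA n + n := by
  rw [phi_eq_goldenRatio, goldenRatio_sq, add_one_mul,
    Nat.floor_add_natCast (by positivity), wythoffA, phi_eq_goldenRatio]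

theorem wythoffA_strictMono : StrictMono wythoffA := by
  refine strictMono_nat_of_lt_succ fun n ↦ ?_
  have h : phi * n + 1 ≤ phi * (n + 1 : ℕ) := by
    push_cast
    linarith [phi_eq_goldenRatio ▸ one_lt_goldenRatio]
  calc wythoffA n < ⌊phi * n⌋₊ + 1 := Nat.lt_succ_self _
    _ = ⌊phi * n + 1⌋₊ := (Nat.floor_add_one (mul_nonneg phi_pos.le n.cast_nonneg)).symm
    _ ≤ wythoffA (n + 1) := Nat.floor_le_floor h

theorem goldenRatio_holderConjugate_sq : goldenRatio.HolderConjugate (goldenRatio ^ 2) := by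
  rw [Real.holderConjugate_iff, goldenRatio_sq]
  refine ⟨one_lt_goldenRatio, ?_⟩
  have hpos := goldenRatio_pos
  have hsq := goldenRatio_sq
  generalize goldenRatio = g at hpos hsq ⊢
  field_simp
  linear_combination -hsq

theorem xor_exists_wythoffA_eq {j : ℕ} (hj : 0 < j) :
    Xor (∃ n, 0 < n ∧ wythoffA n = j) (∃ n, 0 < n ∧ wythoffA n + n = j) := by
  have h := goldenRatio_irrational.xor_exists_natFloor_mul_eq goldenRatio_holderConjugate_sq hj
  simp only [← phi_eq_goldenRatio, floor_phi_sq_mul] at h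
  exact h

theorem exists_wythoffA_eq_or (j : ℕ) :
    (∃ n, wythoffA n = j) ∨ ∃ n, 0 < n ∧ wythoffA n + n = j := by
  rcases Nat.eq_zero_or_pos j with rfl | hj
  · exact Or.inl ⟨0, wythoffA_zero⟩
  rcases xor_exists_wythoffA_eq hj with ⟨⟨n, -, hn⟩, -⟩ | ⟨h, -⟩
  · exact Or.inl ⟨n, hn⟩
  · exact Or.inr h

theorem wythoffA_eq_add_self_iff {m n : ℕ} : wythoffA m = wythoffA n + n ↔ m = 0 ∧ n = 0 := by
  refine ⟨fun h ↦ ?_, fun ⟨hm, hn⟩ ↦ by simp [hm, hn]⟩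
  rcases Nat.eq_zero_or_pos n with rfl | hn
  · exact ⟨wythoffA_strictMono.injective (by simpa using h), rfl⟩
  rcases Nat.eq_zero_or_pos m with rfl | hm
  · simp only [wythoffA_zero] at h
    omega
  rcases xor_exists_wythoffA_eq (j := wythoffA n + n) (by omega) with ⟨-, hB⟩ | ⟨-, hA⟩
  · exact absurd ⟨n, hn, rfl⟩ hB
  · exact absurd ⟨m, hm, h⟩ hA

def wythoffPairs : Set (ℕ × ℕ) :=
  {p | ∃ n, p = (wythoffA n, wythoffA n + n) ∨ p = (wythoffA n + n, wythoffA n)}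

namespace wythoffPairs

theorem swap_mem_iff {p : ℕ × ℕ} : p.swap ∈ wythoffPairs ↔ p ∈ wythoffPairs := by
  refine exists_congr fun n ↦ ?_
  rw [or_comm, Prod.swap_eq_iff_eq_swap, Prod.swap_eq_iff_eq_swap]
  rfl

theorem eq_of_fst_eq {p q : ℕ × ℕ} (hp : p ∈ wythoffPairs) (hq : q ∈ wythoffPairs)
    (h : p.1 = q.1) : p = q := by
  have hA : Function.Injective wythoffA := wythoffA_strictMono.injective
  have hB : Function.Injective fun n ↦ wythoffA n + n :=
    (wythoffA_strictMono.add strictMono_id).injective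
  rcases hp with ⟨n, rfl | rfl⟩ <;> rcases hq with ⟨m, rfl | rfl⟩ <;> simp only at h
  · rw [hA h]
  · obtain ⟨rfl, rfl⟩ := wythoffA_eq_add_self_iff.mp h
    rfl
  · obtain ⟨rfl, rfl⟩ := wythoffA_eq_add_self_iff.mp h.symm
    rfl
  · rw [hB h]

theorem eq_of_snd_eq {p q : ℕ × ℕ} (hp : p ∈ wythoffPairs) (hq : q ∈ wythoffPairs)
    (h : p.2 = q.2) : p = q :=
  Prod.swap_injective (eq_of_fst_eq (swap_mem_iff.mpr hp) (swap_mem_iff.mpr hq) h)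

theorem eq_of_sub_eq {p q : ℕ × ℕ} (hp : p ∈ wythoffPairs) (hq : q ∈ wythoffPairs)
    (h : (p.2 : ℤ) - p.1 = q.2 - q.1) : p = q := by
  rcases hp with ⟨n, rfl | rfl⟩ <;> rcases hq with ⟨m, rfl | rfl⟩ <;> push_cast at h
  · obtain rfl : n = m := by omega
    rfl
  · obtain ⟨rfl, rfl⟩ : n = 0 ∧ m = 0 := by omega
    rfl
  · obtain ⟨rfl, rfl⟩ : n = 0 ∧ m = 0 := by omega
    rfl
  · obtain rfl : n = m := by omega
    rfl

end wythoffPairs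

theorem wythoffMove_iff {p q : ℕ × ℕ} :
    wythoffMove p q ↔ q.1 ≤ p.1 ∧ q.2 ≤ p.2 ∧ q ≠ p ∧
      (q.1 = p.1 ∨ q.2 = p.2 ∨ (q.2 : ℤ) - q.1 = p.2 - p.1) := by
  obtain ⟨x, y⟩ := p
  obtain ⟨x', y'⟩ := q
  simp only [wythoffMove, Prod.mk.injEq, ne_eq]
  constructor
  · rintro ⟨t, ht, ⟨htx, rfl, rfl⟩ | ⟨hty, rfl, rfl⟩ | ⟨htx, hty, rfl, rfl⟩⟩ <;> omega
  · rintro ⟨hx, hy, hne, rfl | rfl | hd⟩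
    · exact ⟨y - y', by omega, Or.inr (Or.inl ⟨by omega, rfl, by omega⟩)⟩
    · exact ⟨x - x', by omega, Or.inl ⟨by omega, by omega, rfl⟩⟩
    · exact ⟨x - x', by omega, Or.inr (Or.inr ⟨by omega, by omega, by omega, by omega⟩)⟩

theorem wythoffMove.sum_lt {p q : ℕ × ℕ} (h : wythoffMove p q) : q.1 + q.2 < p.1 + p.2 := by
  rw [wythoffMove_iff, ne_eq, Prod.ext_iff] at h
  omega

theorem wythoffMove_swap {p q : ℕ × ℕ} : wythoffMove p.swap q.swap ↔ wythoffMove p q := by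
  simp only [wythoffMove_iff, Prod.fst_swap, Prod.snd_swap, ne_eq, Prod.ext_iff]
  omega

theorem notMem_wythoffPairs_of_wythoffMove {p q : ℕ × ℕ} (hmove : wythoffMove p q)
    (hp : p ∈ wythoffPairs) : q ∉ wythoffPairs := by
  intro hq
  obtain ⟨-, -, hne, h | h | h⟩ := wythoffMove_iff.mp hmove
  · exact hne (wythoffPairs.eq_of_fst_eq hq hp h)
  · exact hne (wythoffPairs.eq_of_snd_eq hq hp h)
  · exact hne (wythoffPairs.eq_of_sub_eq hq hp h)

theorem exists_wythoffMove_mem_wythoffPairs_of_le {x y : ℕ} (hxy : x ≤ y)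
    (h : (x, y) ∉ wythoffPairs) : ∃ q, wythoffMove (x, y) q ∧ q ∈ wythoffPairs := by
  rcases exists_wythoffA_eq_or x with ⟨n, rfl⟩ | ⟨n, hn, rfl⟩
  · obtain ⟨d, rfl⟩ : ∃ d, y = wythoffA n + d := ⟨y - wythoffA n, by omega⟩
    rcases lt_trichotomy n d with hlt | rfl | hgt
    · refine ⟨(wythoffA n, wythoffA n + n), wythoffMove_iff.mpr ?_, n, Or.inl rfl⟩
      rw [ne_eq, Prod.ext_iff]
      omega
    · exact absurd ⟨n, Or.inl rfl⟩ h
    · have := wythoffA_strictMono hgt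
      refine ⟨(wythoffA d, wythoffA d + d), wythoffMove_iff.mpr ?_, d, Or.inl rfl⟩
      rw [ne_eq, Prod.ext_iff]
      omega
  · refine ⟨(wythoffA n + n, wythoffA n), wythoffMove_iff.mpr ?_, n, Or.inr rfl⟩
    rw [ne_eq, Prod.ext_iff]
    omega

theorem exists_wythoffMove_mem_wythoffPairs {p : ℕ × ℕ} (h : p ∉ wythoffPairs) :
    ∃ q, wythoffMove p q ∧ q ∈ wythoffPairs := by
  obtain ⟨x, y⟩ := p
  rcases le_total x y with hxy | hyx
  · exact exists_wythoffMove_mem_wythoffPairs_of_le hxy h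
  · have h' : (y, x) ∉ wythoffPairs := mt (wythoffPairs.swap_mem_iff (p := (x, y))).mp h
    obtain ⟨q, hmove, hq⟩ := exists_wythoffMove_mem_wythoffPairs_of_le hyx h'
    exact ⟨q.swap, wythoffMove_swap.mp hmove, wythoffPairs.swap_mem_iff.mpr hq⟩

theorem stmt_16 :
    {pos : ℕ × ℕ | PPos wythoffMove pos} =
      {pos : ℕ × ℕ | ∃ n : ℕ, pos = (⌊phi * n⌋₊, ⌊phi ^ 2 * n⌋₊)} ∪
      {pos : ℕ × ℕ | ∃ n : ℕ, pos = (⌊phi ^ 2 * n⌋₊, ⌊phi * n⌋₊)} := by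
  ext p
  rw [Set.mem_ofPred_eq, PPos_iff_mem_of_stable_of_absorbing
    (fun _ _ ↦ notMem_wythoffPairs_of_wythoffMove)
    (fun _ hp ↦ (exists_wythoffMove_mem_wythoffPairs hp).imp fun _ ⟨hmove, hq⟩ ↦
      ⟨hmove, hmove.sum_lt, hq⟩)]
  simp only [wythoffPairs, Set.mem_union, Set.mem_ofPred_eq, floor_phi_sq_mul, exists_or]
  rfl
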